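/- arXiv:1705.00576 — 4 statements merged into one kernel-verified Lean document; each statement's English description precedes it below -/
import Mathlib

section
/- Let V : ℝ → ℝ be real analytic on (0,∞) and let V_eff(r, ℓ) = V(r) + ℓ/(2r²). If two differentiable branches of critical points r₁(ℓ) ≠ r₂(ℓ) have equal critical values V_eff(r₁(ℓ₀), ℓ₀) = V_eff(r₂(ℓ₀), ℓ₀) at some ℓ₀, then the derivatives of the two critical values with respect to ℓ differ at ℓ₀; in particular the critical values are distinct for ℓ ≠ ℓ₀ near ℓ₀. -/
open Set Real Filter Topology

/-!
Envelope theorem: along a branch `r(ℓ)` of critical points of `V_eff(·, ℓ)`, the chain-rule term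
`∂ᵣV_eff · r'(ℓ)` vanishes, so the critical value has derivative `∂_ℓ V_eff = 1 / (2 r(ℓ)²)`.
Since `r ↦ 1 / (2 r²)` is injective on `(0, ∞)`, two distinct branches have critical values with
distinct derivatives at `ℓ₀`; their difference thus has nonzero derivative there and cannot
vanish on a punctured neighbourhood of `ℓ₀`.
-/

lemma hasDerivAt_div_two_mul_sq (ℓ : ℝ) {s : ℝ} (hs : s ≠ 0) :
    HasDerivAt (fun s : ℝ => ℓ / (2 * s ^ 2)) (-ℓ / s ^ 3) s := by
  refine ((hasDerivAt_const s ℓ).fun_div ((hasDerivAt_pow 2 s).const_mul 2)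
    (by positivity)).congr_deriv ?_
  field_simp
  ring

lemma hasDerivAt_of_deriv_add_div_two_mul_sq_eq_zero {V : ℝ → ℝ} {ℓ s : ℝ} (hs : s ≠ 0)
    (hV : DifferentiableAt ℝ V s) (hcrit : deriv (fun s => V s + ℓ / (2 * s ^ 2)) s = 0) :
    HasDerivAt V (ℓ / s ^ 3) s := by
  have hsum := (hV.hasDerivAt.fun_add (hasDerivAt_div_two_mul_sq ℓ hs)).deriv
  rw [hcrit, neg_div] at hsum
  exact hV.hasDerivAt.congr_deriv (by linarith)

theorem hasDerivAt_criticalValue {V r : ℝ → ℝ} {ℓ₀ : ℝ} (hr : r ℓ₀ ≠ 0)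
    (hV : DifferentiableAt ℝ V (r ℓ₀)) (hr' : DifferentiableAt ℝ r ℓ₀)
    (hcrit : deriv (fun s => V s + ℓ₀ / (2 * s ^ 2)) (r ℓ₀) = 0) :
    HasDerivAt (fun ℓ => V (r ℓ) + ℓ / (2 * r ℓ ^ 2)) (1 / (2 * r ℓ₀ ^ 2)) ℓ₀ := by
  have hV' := hasDerivAt_of_deriv_add_div_two_mul_sq_eq_zero hr hV hcrit
  refine ((hV'.comp ℓ₀ hr'.hasDerivAt).fun_add ((hasDerivAt_id' ℓ₀).fun_div
    ((hr'.hasDerivAt.fun_pow 2).const_mul 2) (by positivity))).congr_deriv ?_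
  field_simp
  ring

lemma one_div_two_mul_sq_ne {x y : ℝ} (hx : 0 ≤ x) (hy : 0 ≤ y) (h : x ≠ y) :
    1 / (2 * x ^ 2) ≠ 1 / (2 * y ^ 2) := by
  simpa [pow_left_inj₀ hx hy two_ne_zero] using h

theorem critical_values_separate_general
    (V : ℝ → ℝ) (hV : AnalyticOnNhd ℝ V (Ioi (0:ℝ)))
    (a b : ℝ) (r₁ r₂ : ℝ → ℝ) (ℓ₀ : ℝ) (hℓ₀ : ℓ₀ ∈ Ioo a b)
    (hr₁pos : ∀ ℓ ∈ Ioo a b, 0 < r₁ ℓ)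
    (hr₂pos : ∀ ℓ ∈ Ioo a b, 0 < r₂ ℓ)
    (hr₁diff : ∀ ℓ ∈ Ioo a b, DifferentiableAt ℝ r₁ ℓ)
    (hr₂diff : ∀ ℓ ∈ Ioo a b, DifferentiableAt ℝ r₂ ℓ)
    (hcrit₁ : ∀ ℓ ∈ Ioo a b,
      deriv (fun s => V s + ℓ / (2 * s ^ 2)) (r₁ ℓ) = 0)
    (hcrit₂ : ∀ ℓ ∈ Ioo a b,
      deriv (fun s => V s + ℓ / (2 * s ^ 2)) (r₂ ℓ) = 0)
    (hne : r₁ ℓ₀ ≠ r₂ ℓ₀) :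
    deriv (fun ℓ => V (r₁ ℓ) + ℓ / (2 * (r₁ ℓ) ^ 2)) ℓ₀
      ≠ deriv (fun ℓ => V (r₂ ℓ) + ℓ / (2 * (r₂ ℓ) ^ 2)) ℓ₀
    ∧ ∀ᶠ ℓ in 𝓝[≠] ℓ₀,
        V (r₁ ℓ) + ℓ / (2 * (r₁ ℓ) ^ 2)
          ≠ V (r₂ ℓ) + ℓ / (2 * (r₂ ℓ) ^ 2) := by
  have hpos₁ := hr₁pos ℓ₀ hℓ₀
  have hpos₂ := hr₂pos ℓ₀ hℓ₀
  have h₁ := hasDerivAt_criticalValue hpos₁.ne' (hV _ hpos₁).differentiableAt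
    (hr₁diff ℓ₀ hℓ₀) (hcrit₁ ℓ₀ hℓ₀)
  have h₂ := hasDerivAt_criticalValue hpos₂.ne' (hV _ hpos₂).differentiableAt
    (hr₂diff ℓ₀ hℓ₀) (hcrit₂ ℓ₀ hℓ₀)
  have hslopes := one_div_two_mul_sq_ne hpos₁.le hpos₂.le hne
  refine ⟨by rwa [h₁.deriv, h₂.deriv], ?_⟩
  filter_upwards [(h₁.sub h₂).eventually_ne (c := 0) (sub_ne_zero.2 hslopes)] with ℓ hℓ
  exact sub_ne_zero.1 hℓ

/-- If two differentiable branches of critical points of the effective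
potential have equal critical values at `ℓ₀`, then the derivatives of the
critical values differ at `ℓ₀`, and the critical values are distinct for
`ℓ ≠ ℓ₀` near `ℓ₀`. -/
theorem critical_values_separate
    (V : ℝ → ℝ) (hV : AnalyticOnNhd ℝ V (Ioi (0:ℝ)))
    (a b : ℝ) (r₁ r₂ : ℝ → ℝ) (ℓ₀ : ℝ) (hℓ₀ : ℓ₀ ∈ Ioo a b)
    (hr₁pos : ∀ ℓ ∈ Ioo a b, 0 < r₁ ℓ)
    (hr₂pos : ∀ ℓ ∈ Ioo a b, 0 < r₂ ℓ)
    (hr₁diff : ∀ ℓ ∈ Ioo a b, DifferentiableAt ℝ r₁ ℓ)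
    (hr₂diff : ∀ ℓ ∈ Ioo a b, DifferentiableAt ℝ r₂ ℓ)
    (hcrit₁ : ∀ ℓ ∈ Ioo a b,
      deriv (fun s => V s + ℓ / (2 * s ^ 2)) (r₁ ℓ) = 0)
    (hcrit₂ : ∀ ℓ ∈ Ioo a b,
      deriv (fun s => V s + ℓ / (2 * s ^ 2)) (r₂ ℓ) = 0)
    (hne : r₁ ℓ₀ ≠ r₂ ℓ₀)
    (heq : V (r₁ ℓ₀) + ℓ₀ / (2 * (r₁ ℓ₀) ^ 2)
         = V (r₂ ℓ₀) + ℓ₀ / (2 * (r₂ ℓ₀) ^ 2)) :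
    deriv (fun ℓ => V (r₁ ℓ) + ℓ / (2 * (r₁ ℓ) ^ 2)) ℓ₀
      ≠ deriv (fun ℓ => V (r₂ ℓ) + ℓ / (2 * (r₂ ℓ) ^ 2)) ℓ₀
    ∧ ∀ᶠ ℓ in 𝓝[≠] ℓ₀,
        V (r₁ ℓ) + ℓ / (2 * (r₁ ℓ) ^ 2)
          ≠ V (r₂ ℓ) + ℓ / (2 * (r₂ ℓ) ^ 2) :=
  critical_values_separate_general V hV a b r₁ r₂ ℓ₀ hℓ₀ hr₁pos hr₂pos hr₁diff hr₂diff hcrit₁ hcrit₂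
    hne
end

section
/- Let V be real analytic on (0,∞) and suppose r̄ is a degenerate critical point of V_eff(·, ℓ̄) = V + ℓ̄/(2r²) such that the first nonvanishing higher derivative of V_eff at r̄ is ∂_r^{n+1} V_eff(r̄, ℓ̄) = a ≠ 0 with n odd. Then there exists a neighborhood U of 0 and an analytic function ξ ↦ r₀(ξ) with r₀(0) = r̄ such that r₀((ℓ − ℓ̄)^{1/n}) is a critical point of V_eff(·, ℓ), and for ℓ ≠ ℓ̄ sufficiently close to ℓ̄ this critical point is nondegenerate. -/
open Set Real Topology

open Filter in

private lemma odd_pow_surj {n : ℕ} (hn : Odd n) (c : ℝ) : ∃ u : ℝ, u ^ n = c := by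
  have hn0 : (n : ℝ) ≠ 0 := by
    have := hn.pos; positivity
  rcases le_or_gt 0 c with hc | hc
  · refine ⟨c ^ ((n : ℝ)⁻¹), ?_⟩
    rw [← Real.rpow_natCast (c ^ ((n:ℝ)⁻¹)) n, ← Real.rpow_mul hc,
      inv_mul_cancel₀ hn0, Real.rpow_one]
  · refine ⟨-((-c) ^ ((n : ℝ)⁻¹)), ?_⟩
    rw [hn.neg_pow, ← Real.rpow_natCast ((-c) ^ ((n:ℝ)⁻¹)) n,
      ← Real.rpow_mul (by linarith), inv_mul_cancel₀ hn0, Real.rpow_one]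
    ring

private lemma analytic_local_inverse {f : ℝ → ℝ} {a : ℝ} (hf : AnalyticAt ℝ f a)
    (hd : deriv f a ≠ 0) :
    ∃ g : ℝ → ℝ, AnalyticAt ℝ g (f a) ∧ g (f a) = a ∧ ∀ᶠ y in 𝓝 (f a), f (g y) = y := by
  have hs : HasStrictDerivAt f (deriv f a) a := by
    have := hf.hasStrictFDerivAt.hasStrictDerivAt
    simpa [fderiv_apply_one_eq_deriv] using this
  have F := hs.hasStrictFDerivAt_equiv hd
  have hmem : a ∈ (F.toOpenPartialHomeomorph f).source := F.mem_toOpenPartialHomeomorph_source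
  have hfd : fderiv ℝ f a =
      (ContinuousLinearEquiv.unitsEquivAut ℝ (Units.mk0 (deriv f a) hd) : ℝ →L[ℝ] ℝ) := by
    apply ContinuousLinearMap.ext_ring
    simp [fderiv_apply_one_eq_deriv, ContinuousLinearEquiv.unitsEquivAut]
  have hsymm : AnalyticAt ℝ (F.toOpenPartialHomeomorph f).symm (f a) :=
    (F.toOpenPartialHomeomorph f).analyticAt_symm' hmem hf hfd
  exact ⟨(F.toOpenPartialHomeomorph f).symm, hsymm,
    (F.toOpenPartialHomeomorph f).left_inv hmem, F.eventually_right_inverse⟩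

open Filter in

private lemma iteratedDeriv_of_pow_mul : ∀ (m : ℕ) {f g : ℝ → ℝ} {a : ℝ},
    AnalyticAt ℝ g a → (∀ᶠ z in 𝓝 a, f z = (z - a) ^ m * g z) →
    iteratedDeriv m f a = m.factorial * g a := by
  intro m
  induction m with
  | zero =>
    intro f g a hg hfg
    simpa using hfg.self_of_nhds
  | succ m ih =>
    intro f g a hg hfg
    rw [iteratedDeriv_succ']
    have hgd : AnalyticAt ℝ (deriv g) a := by
      have h1 := ((ContinuousLinearMap.apply ℝ ℝ (1:ℝ)).analyticAt
        (fderiv ℝ g a)).comp hg.fderiv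
      apply h1.congr
      filter_upwards with z
      simp [Function.comp, fderiv_apply_one_eq_deriv]
    have hg' : AnalyticAt ℝ (fun z => ((m:ℝ)+1) * g z + (z - a) * deriv g z) a :=
      (analyticAt_const.mul hg).add
        (((analyticAt_id).sub analyticAt_const).mul hgd)
    have hev : ∀ᶠ z in 𝓝 a, deriv f z
        = (z - a) ^ m * (((m:ℝ)+1) * g z + (z - a) * deriv g z) := by
      have h1 : deriv f =ᶠ[𝓝 a] deriv (fun z => (z - a) ^ (m+1) * g z) :=
        Filter.EventuallyEq.deriv (hfg : f =ᶠ[𝓝 a] _)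
      filter_upwards [h1, hg.eventually_analyticAt] with z h1z h2z
      rw [h1z]
      have hpow : HasDerivAt (fun z : ℝ => (z - a) ^ (m+1))
          ((((m:ℕ)+1 : ℕ) : ℝ) * (z - a) ^ m * 1) z := by
        have := (((hasDerivAt_id z).sub_const a).fun_pow (m+1))
        simpa using this
      have hd1 := hpow.fun_mul h2z.differentiableAt.hasDerivAt
      rw [hd1.deriv]
      push_cast
      ring
    have := ih hg' hev
    rw [this]
    simp [Nat.factorial_succ]
    ring

private lemma factor_of_derivs {f : ℝ → ℝ} {a : ℝ} {n : ℕ} (hf : AnalyticAt ℝ f a)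
    (h0 : ∀ k < n, iteratedDeriv k f a = 0) (hnz : iteratedDeriv n f a ≠ 0) :
    ∃ g : ℝ → ℝ, AnalyticAt ℝ g a ∧ g a ≠ 0 ∧ ∀ᶠ z in 𝓝 a, f z = (z - a) ^ n * g z := by
  have hord : analyticOrderAt f a ≠ ⊤ := by
    intro h
    rw [analyticOrderAt_eq_top] at h
    apply hnz
    have hzero : ∀ (m : ℕ) (x : ℝ), iteratedDeriv m (fun _ : ℝ => (0:ℝ)) x = 0 := by
      intro m
      induction m with
      | zero => intro x; simp
      | succ m ih =>
        intro x
        rw [iteratedDeriv_succ',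
          show deriv (fun _ : ℝ => (0:ℝ)) = fun _ : ℝ => (0:ℝ) from
            funext fun y => deriv_const y 0]
        exact ih x
    have hfe : f =ᶠ[𝓝 a] (fun _ => (0:ℝ)) := h
    rw [hfe.iteratedDeriv_eq n]
    exact hzero n a
  obtain ⟨k, hk⟩ : ∃ k : ℕ, analyticOrderAt f a = k := ⟨(analyticOrderAt f a).toNat, (ENat.coe_toNat hord).symm⟩
  obtain ⟨g, hg, hga, hfac⟩ := hf.analyticOrderAt_eq_natCast.mp hk
  have hfac' : ∀ᶠ z in 𝓝 a, f z = (z - a) ^ k * g z := by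
    filter_upwards [hfac] with z hz using by simpa [smul_eq_mul] using hz
  have hkn : k = n := by
    rcases lt_trichotomy k n with h | h | h
    · exfalso
      have := iteratedDeriv_of_pow_mul k hg hfac'
      have h2 : (k.factorial : ℝ) * g a = 0 := by rw [← this]; exact h0 k h
      rcases mul_eq_zero.mp h2 with h3 | h3
      · exact absurd h3 (by positivity)
      · exact hga h3
    · exact h
    · exfalso
      apply hnz
      have hg2 : AnalyticAt ℝ (fun z => (z - a) ^ (k - n) * g z) a :=
        (((analyticAt_id).sub analyticAt_const).pow _).mul hg
      have hfac2 : ∀ᶠ z in 𝓝 a, f z = (z - a) ^ n * ((z - a) ^ (k - n) * g z) := by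
        filter_upwards [hfac'] with z hz
        rw [hz, ← mul_assoc, ← pow_add]
        congr 2
        omega
      have := iteratedDeriv_of_pow_mul n hg2 hfac2
      rw [this]
      have : a - a = 0 := sub_self a
      rw [this, zero_pow (by omega)]
      ring
  subst hkn
  exact ⟨g, hg, hga, hfac'⟩

open Filter in
/-- Persistence of extrema of the effective potential: if `r̄` is a critical
point of `V_eff(·, ℓ̄)` whose first nonvanishing higher derivative has odd
order `n+1`, then there is an analytic branch `ξ ↦ r₀(ξ)` of critical points
of `V_eff(·, ℓ̄ + ξⁿ)` with `r₀(0) = r̄`, nondegenerate for `ξ ≠ 0` small. -/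
theorem critical_point_branch_odd
    (V : ℝ → ℝ) (hV : AnalyticOnNhd ℝ V (Ioi (0:ℝ)))
    (rb ℓb : ℝ) (hrb : 0 < rb) (n : ℕ) (hn : Odd n) (hn2 : 2 ≤ n)
    (hcrit : ∀ k, 1 ≤ k → k ≤ n →
      iteratedDeriv k (fun s => V s + ℓb / (2 * s ^ 2)) rb = 0)
    (ha : iteratedDeriv (n + 1) (fun s => V s + ℓb / (2 * s ^ 2)) rb ≠ 0) :
    ∃ U ∈ 𝓝 (0:ℝ), ∃ r₀ : ℝ → ℝ,
      AnalyticOnNhd ℝ r₀ U ∧ r₀ 0 = rb ∧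
      ∀ ξ ∈ U,
        deriv (fun s => V s + (ℓb + ξ ^ n) / (2 * s ^ 2)) (r₀ ξ) = 0 ∧
        (ξ ≠ 0 →
          deriv (deriv (fun s => V s + (ℓb + ξ ^ n) / (2 * s ^ 2))) (r₀ ξ)
            ≠ 0) := by
  classical
  -- analyticity of the effective potential
  have hVeffA : ∀ ℓ : ℝ, AnalyticOnNhd ℝ (fun s => V s + ℓ / (2 * s ^ 2)) (Ioi (0:ℝ)) := by
    intro ℓ r hr
    have hr0 : (0:ℝ) < r := hr
    exact (hV r hr).add (analyticAt_const.div
      (analyticAt_const.mul (analyticAt_id.pow 2)) (by positivity))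
  -- derivative formula
  have hder : ∀ ℓ : ℝ, ∀ r : ℝ, 0 < r →
      deriv (fun s => V s + ℓ / (2 * s ^ 2)) r = deriv V r - ℓ / r ^ 3 := by
    intro ℓ r hr
    have hd : HasDerivAt (fun s : ℝ => 2 * s ^ 2) (2 * (2 * r ^ 1)) r :=
      (hasDerivAt_pow 2 r).const_mul 2
    have h1 : HasDerivAt (fun s : ℝ => ℓ / (2 * s ^ 2))
        ((0 * (2 * r ^ 2) - ℓ * (2 * (2 * r ^ 1))) / (2 * r ^ 2) ^ 2) r :=
      (hasDerivAt_const r ℓ).div hd (by positivity)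
    have h2 : HasDerivAt V (deriv V r) r := ((hV r hr).differentiableAt).hasDerivAt
    rw [(h2.fun_add h1).deriv]
    have hrne : r ≠ 0 := ne_of_gt hr
    field_simp
    ring
  -- the function Â = ∂_r V_eff(·, ℓb)
  set A : ℝ → ℝ := deriv (fun s => V s + ℓb / (2 * s ^ 2)) with hAdef
  have hAan : AnalyticAt ℝ A rb := (hVeffA ℓb).deriv rb hrb
  -- derivative conditions on A
  have hA0 : ∀ k < n, iteratedDeriv k A rb = 0 := by
    intro k hk
    have : iteratedDeriv (k+1) (fun s => V s + ℓb / (2 * s ^ 2)) rb = 0 :=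
      hcrit (k+1) (by omega) (by omega)
    rwa [iteratedDeriv_succ'] at this
  have hAn : iteratedDeriv n A rb ≠ 0 := by
    rw [← iteratedDeriv_succ']
    exact ha
  obtain ⟨g, hg, hga, hfac⟩ := factor_of_derivs hAan hA0 hAn
  -- D and its root
  set D : ℝ → ℝ := fun z => g z * z ^ 3 with hDdef
  have hDan : AnalyticAt ℝ D rb := hg.mul (analyticAt_id.pow 3)
  have hDrb : D rb ≠ 0 := by
    have : rb ^ 3 ≠ 0 := by positivity
    exact mul_ne_zero hga this
  obtain ⟨u, hu⟩ := odd_pow_surj hn (D rb)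
  have hu0 : u ≠ 0 := by
    intro h
    rw [h, zero_pow (by omega)] at hu
    exact hDrb hu.symm
  -- local n-th root
  have hqan : AnalyticAt ℝ (fun x : ℝ => x ^ n) u := analyticAt_id.pow n
  have hqd : deriv (fun x : ℝ => x ^ n) u ≠ 0 := by
    rw [deriv_pow_field]
    have : u ^ (n-1) ≠ 0 := pow_ne_zero _ hu0
    have hnn : (n:ℝ) ≠ 0 := by
      have := hn.pos; positivity
    exact mul_ne_zero hnn this
  obtain ⟨ρ, hρan, hρu, hρroot⟩ := analytic_local_inverse hqan hqd
  rw [hu] at hρan hρu hρroot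
  -- E = ρ ∘ D, the analytic n-th root of D
  set E : ℝ → ℝ := fun z => ρ (D z) with hEdef
  have hEan : AnalyticAt ℝ E rb := by
    apply AnalyticAt.comp
    · exact hρan
    · exact hDan
  have hErb : E rb = u := hρu
  have hEroot : ∀ᶠ z in 𝓝 rb, (E z) ^ n = D z := by
    have := hDan.continuousAt.eventually hρroot
    filter_upwards [this] with z hz using hz
  -- φ and its inverse ψ
  set φ : ℝ → ℝ := fun z => (z - rb) * E z with hφdef
  have hφan : AnalyticAt ℝ φ rb := ((analyticAt_id).sub analyticAt_const).mul hEan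
  have hφ0 : φ rb = 0 := by simp [hφdef]
  have hφd : HasDerivAt φ u rb := by
    have h1 : HasDerivAt (fun z : ℝ => z - rb) 1 rb := (hasDerivAt_id rb).sub_const rb
    have h2 : HasDerivAt E (deriv E rb) rb := hEan.differentiableAt.hasDerivAt
    have := h1.fun_mul h2
    simpa [hErb] using this
  have hφd' : deriv φ rb ≠ 0 := by rw [hφd.deriv]; exact hu0
  obtain ⟨ψ, hψan, hψ0, hψr⟩ := analytic_local_inverse hφan hφd'
  rw [hφ0] at hψan hψ0 hψr
  -- open neighborhood of rb with all needed properties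
  have hcont5 : ContinuousAt (fun z => (n:ℝ) * D z + (z - rb) * deriv D z) rb := by
    have hDd : AnalyticAt ℝ (deriv D) rb := by
      have h1 := ((ContinuousLinearMap.apply ℝ ℝ (1:ℝ)).analyticAt
        (fderiv ℝ D rb)).comp hDan.fderiv
      apply AnalyticAt.congr h1
      filter_upwards with z
      simp [Function.comp, fderiv_apply_one_eq_deriv]
    exact ((analyticAt_const.mul hDan).add
      (((analyticAt_id).sub analyticAt_const).mul hDd)).continuousAt
  have h5rb : (n:ℝ) * D rb + (rb - rb) * deriv D rb ≠ 0 := by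
    have hnn : (n:ℝ) ≠ 0 := by have := hn.pos; positivity
    simpa using mul_ne_zero hnn hDrb
  have hev : ∀ᶠ z in 𝓝 rb, A z = (z - rb) ^ n * g z ∧ (E z) ^ n = D z ∧ 0 < z ∧
      AnalyticAt ℝ g z ∧ (n:ℝ) * D z + (z - rb) * deriv D z ≠ 0 := by
    filter_upwards [hfac, hEroot, eventually_gt_nhds hrb, hg.eventually_analyticAt,
      hcont5.eventually_ne h5rb] with z h1 h2 h3 h4 h5
    exact ⟨h1, h2, h3, h4, h5⟩
  obtain ⟨t, htsub, htopen, htrb⟩ := eventually_nhds_iff.mp hev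
  -- neighborhood of 0 in ξ
  have f1 : ∀ᶠ ξ in 𝓝 (0:ℝ), AnalyticAt ℝ ψ ξ := hψan.eventually_analyticAt
  have f3 : ∀ᶠ ξ in 𝓝 (0:ℝ), ψ ξ ∈ t := by
    have : ContinuousAt ψ 0 := hψan.continuousAt
    apply this.eventually_mem
    rw [hψ0]
    exact htopen.mem_nhds htrb
  refine ⟨{ξ | AnalyticAt ℝ ψ ξ ∧ φ (ψ ξ) = ξ ∧ ψ ξ ∈ t}, (f1.and (hψr.and f3)), ψ,
    fun ξ hξ => hξ.1, hψ0, ?_⟩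
  rintro ξ ⟨hξan, hξinv, hξt⟩
  set r : ℝ := ψ ξ with hrdef
  obtain ⟨hP1, hP2, hP3, hP4, hP5⟩ := htsub r hξt
  have hrne : r ≠ 0 := ne_of_gt hP3
  -- key identity
  have hkey : (r - rb) ^ n * D r = ξ ^ n := by
    rw [← hP2, ← mul_pow, ← hξinv]
  -- A r in terms of deriv V
  have hAr : A r = deriv V r - ℓb / r ^ 3 := hder ℓb r hP3
  constructor
  · -- critical point
    rw [hder (ℓb + ξ ^ n) r hP3]
    have h1 : deriv V r = (r - rb) ^ n * g r + ℓb / r ^ 3 := by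
      rw [← hP1, hAr]; ring
    rw [h1, ← hkey, hDdef]
    field_simp
    ring
  · -- nondegeneracy
    intro hξ0
    have hrrb : r - rb ≠ 0 := by
      intro h
      apply hξ0
      rw [← hξinv, hφdef]
      simp [h]
    -- local form of the derivative
    set K : ℝ → ℝ := fun z => ((z - rb) ^ n * (g z * z ^ 3) - ξ ^ n) / z ^ 3 with hKdef
    have hKeq : deriv (fun s => V s + (ℓb + ξ ^ n) / (2 * s ^ 2)) =ᶠ[𝓝 r] K := by
      filter_upwards [htopen.mem_nhds hξt] with z hz
      obtain ⟨hQ1, hQ2, hQ3, hQ4, hQ5⟩ := htsub z hz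
      have hzne : z ≠ 0 := ne_of_gt hQ3
      rw [hder (ℓb + ξ ^ n) z hQ3]
      have h1 : deriv V z = (z - rb) ^ n * g z + ℓb / z ^ 3 := by
        have hAz : A z = deriv V z - ℓb / z ^ 3 := hder ℓb z hQ3
        rw [← hQ1, hAz]; ring
      rw [h1, hKdef]
      field_simp
      ring
    rw [hKeq.deriv_eq]
    -- compute deriv K r
    have hDdiff : HasDerivAt D (deriv D r) r :=
      (hP4.mul (analyticAt_id.pow 3)).differentiableAt.hasDerivAt
    have hpow : HasDerivAt (fun z : ℝ => (z - rb) ^ n) ((n:ℝ) * (r - rb) ^ (n-1) * 1) r := by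
      have := ((hasDerivAt_id r).sub_const rb).fun_pow n
      simpa using this
    have hN : HasDerivAt (fun z => (z - rb) ^ n * (g z * z ^ 3) - ξ ^ n)
        ((n:ℝ) * (r - rb) ^ (n-1) * 1 * D r + (r - rb) ^ n * deriv D r) r :=
      (hpow.mul hDdiff).sub_const _
    have hden : HasDerivAt (fun z : ℝ => z ^ 3) ((3:ℕ) * r ^ 2) r := by
      simpa using hasDerivAt_pow 3 r
    have hK : HasDerivAt K
        ((((n:ℝ) * (r - rb) ^ (n-1) * 1 * D r + (r - rb) ^ n * deriv D r) * r ^ 3 -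
          ((r - rb) ^ n * (g r * r ^ 3) - ξ ^ n) * ((3:ℕ) * r ^ 2)) / (r ^ 3) ^ 2) r :=
      hN.div hden (by positivity)
    rw [hK.deriv]
    have hNr0 : (r - rb) ^ n * (g r * r ^ 3) - ξ ^ n = 0 := by
      have hDr : g r * r ^ 3 = D r := rfl
      rw [hDr, hkey]; ring
    rw [hNr0]
    have hfact : (n:ℝ) * (r - rb) ^ (n-1) * 1 * D r + (r - rb) ^ n * deriv D r
        = (r - rb) ^ (n-1) * ((n:ℝ) * D r + (r - rb) * deriv D r) := by
      have hnpos : 1 ≤ n := by omega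
      have : (r - rb) ^ n = (r - rb) ^ (n-1) * (r - rb) := by
        rw [← pow_succ]
        congr 1
        omega
      rw [this]
      ring
    rw [hfact]
    have h1 : (r - rb) ^ (n-1) ≠ 0 := pow_ne_zero _ hrrb
    have h2 : r ^ 3 ≠ 0 := by positivity
    have h3 : ((r:ℝ) ^ 3) ^ 2 ≠ 0 := by positivity
    apply div_ne_zero _ h3
    simpa using mul_ne_zero (mul_ne_zero h1 hP5) h2
end

section
/- Let V be real analytic on (0,∞) and let r̄ be a degenerate critical point of V_eff(·, ℓ̄) = V + ℓ̄/(2r²) which is neither a local maximum nor a local minimum (i.e. the first nonvanishing derivative ∂_r^{n+1}V_eff(r̄, ℓ̄) = a ≠ 0 has n even, n ≥ 2). Then for ℓ near ℓ̄ with (ℓ − ℓ̄)/a < 0, V_eff(·, ℓ) has no critical points near r̄, while for (ℓ − ℓ̄)/a > 0 it has exactly two critical points near r̄, one a nondegenerate local maximum and one a nondegenerate local minimum. -/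
/-!
Put `u r = r ^ 3 * ∂_r V_eff(r, ℓ̄)`. Then `r ^ 3 * ∂_r V_eff(r, ℓ) = u r - (ℓ - ℓ̄)`, so the
critical points of `V_eff(·, ℓ)` are the solutions of `u r = ℓ - ℓ̄`, and at such a point
`∂_r² V_eff(r, ℓ) = u' r / r ^ 3`. By Leibniz' rule `u` vanishes to order exactly `n` at `r̄`,
with `u⁽ⁿ⁾(r̄) = r̄ ^ 3 * a`; as `n - 1` is odd, L'Hôpital shows that `a * u'` changes sign from
negative to positive at `r̄`. So `a * u` has a fold at `r̄`: it is strictly decreasing to `0`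
and then strictly increasing, and `a * u r = a * (ℓ - ℓ̄)` has no solution near `r̄` when the
right side is negative, and exactly one on each side of `r̄` when it is small and positive.
The sign of `u'` at these two solutions tells the maximum from the minimum.
-/

open Set Real Topology Filter
open scoped Nat

theorem tendsto_div_pow_sub_of_iteratedDeriv_eq_zero {f : ℝ → ℝ} {x₀ : ℝ} {m : ℕ}
    (hf : AnalyticAt ℝ f x₀) (hzero : ∀ k < m, iteratedDeriv k f x₀ = 0) :
    Tendsto (fun x => f x / (x - x₀) ^ m) (𝓝[≠] x₀) (𝓝 (iteratedDeriv m f x₀ / m !)) := by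
  induction m generalizing f with
  | zero => simpa using hf.continuousAt.tendsto.mono_left nhdsWithin_le_nhds
  | succ m ih =>
    have hlim := (ih hf.deriv fun k hk => by
      rw [← iteratedDeriv_succ']; exact hzero (k + 1) (by omega)).div_const (m + 1 : ℝ)
    rw [← iteratedDeriv_succ', div_div, ← Nat.cast_add_one, ← Nat.cast_mul, mul_comm,
      ← Nat.factorial_succ] at hlim
    refine HasDerivAt.lhopital_zero_nhdsNE (f' := deriv f)
      (g' := fun x => (m + 1 : ℝ) * (x - x₀) ^ m) ?_ ?_ ?_ ?_ ?_ ?_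
    · exact eventually_nhdsWithin_of_eventually_nhds
        (hf.eventually_analyticAt.mono fun x hx => hx.differentiableAt.hasDerivAt)
    · refine Eventually.of_forall fun x => ?_
      simpa using ((hasDerivAt_id x).sub_const x₀).fun_pow (m + 1)
    · filter_upwards [self_mem_nhdsWithin] with x hx
      exact mul_ne_zero (by positivity) (pow_ne_zero _ (sub_ne_zero.2 hx))
    · have hfx₀ : f x₀ = 0 := by simpa using hzero 0 m.succ_pos
      simpa [hfx₀] using hf.continuousAt.tendsto.mono_left nhdsWithin_le_nhds
    · exact tendsto_nhdsWithin_of_tendsto_nhds (by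
        simpa using (by fun_prop : Continuous fun x : ℝ => (x - x₀) ^ (m + 1)).tendsto x₀)
    · refine hlim.congr fun x => ?_
      rw [div_div, mul_comm]
      push_cast
      rfl

theorem eventually_pos_mul_mul_pow_of_iteratedDeriv_eq_zero {f : ℝ → ℝ} {x₀ : ℝ} {m : ℕ}
    (hf : AnalyticAt ℝ f x₀) (hzero : ∀ k < m, iteratedDeriv k f x₀ = 0)
    (hm : iteratedDeriv m f x₀ ≠ 0) :
    ∀ᶠ x in 𝓝[≠] x₀, 0 < iteratedDeriv m f x₀ * f x * (x - x₀) ^ m := by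
  set c := iteratedDeriv m f x₀
  have hlim := (tendsto_div_pow_sub_of_iteratedDeriv_eq_zero hf hzero).const_mul c
  filter_upwards [hlim.eventually (eventually_gt_nhds (by
    rw [← mul_div_assoc]; exact div_pos (mul_self_pos.2 hm) (by positivity))), self_mem_nhdsWithin]
    with x hx hne
  have hpow : 0 < ((x - x₀) ^ m) ^ 2 := by
    have := pow_ne_zero m (sub_ne_zero.2 hne); positivity
  calc 0 < c * (f x / (x - x₀) ^ m) * ((x - x₀) ^ m) ^ 2 := mul_pos hx hpow
    _ = c * f x * (x - x₀) ^ m := by field_simp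

theorem eventually_pos_mul_mul_sub_of_odd {f : ℝ → ℝ} {x₀ : ℝ} {m : ℕ}
    (hf : AnalyticAt ℝ f x₀) (hzero : ∀ k < m, iteratedDeriv k f x₀ = 0)
    (hm : iteratedDeriv m f x₀ ≠ 0) (hodd : Odd m) :
    ∀ᶠ x in 𝓝[≠] x₀, 0 < iteratedDeriv m f x₀ * f x * (x - x₀) := by
  filter_upwards [eventually_pos_mul_mul_pow_of_iteratedDeriv_eq_zero hf hzero hm] with x hx
  rcases pos_and_pos_or_neg_and_neg_of_mul_pos hx with ⟨h₁, h₂⟩ | ⟨h₁, h₂⟩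
  · exact mul_pos h₁ (hodd.pow_pos_iff.1 h₂)
  · exact mul_pos_of_neg_of_neg h₁ (hodd.pow_neg_iff.1 h₂)

theorem iteratedDeriv_fun_mul_of_iteratedDeriv_eq_zero {𝕜 : Type*} [NontriviallyNormedField 𝕜]
    {u g : 𝕜 → 𝕜} {x : 𝕜} {k : ℕ} (hu : ContDiffAt 𝕜 k u x) (hg : ContDiffAt 𝕜 k g x)
    (hzero : ∀ j < k, iteratedDeriv j g x = 0) :
    iteratedDeriv k (fun y => u y * g y) x = u x * iteratedDeriv k g x := by
  rw [iteratedDeriv_fun_mul hu hg, Finset.sum_range_succ']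
  rw [Finset.sum_eq_zero fun i hi => by rw [hzero _ (by simp at hi; omega), mul_zero]]
  simp

theorem eventually_nhdsGT_zero_forall_abs_sub_lt {p : ℝ → Prop} {x₀ : ℝ}
    (h : ∀ᶠ x in 𝓝[≠] x₀, p x) :
    ∀ᶠ δ in 𝓝[>] 0, ∀ x, |x - x₀| < δ → x ≠ x₀ → p x := by
  obtain ⟨ε, hε, hball⟩ := Metric.eventually_nhds_iff.1 (eventually_nhdsWithin_iff.1 h)
  filter_upwards [Ioo_mem_nhdsGT hε] with δ hδ x hx
  exact hball (by rw [Real.dist_eq]; linarith [hδ.2])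

section Fold

variable {f : ℝ → ℝ} {x₀ δ : ℝ}

theorem strictAntiOn_Icc_of_deriv_mul_sub_pos (hcont : ContinuousOn f (Icc (x₀ - δ) (x₀ + δ)))
    (hsign : ∀ x, |x - x₀| < δ → x ≠ x₀ → 0 < deriv f x * (x - x₀)) :
    StrictAntiOn f (Icc (x₀ - δ) x₀) := by
  refine strictAntiOn_of_deriv_neg (convex_Icc _ _)
    (hcont.mono fun x hx => ⟨hx.1, by linarith [hx.1, hx.2]⟩) fun x hx => ?_
  rw [interior_Icc] at hx
  refine neg_of_mul_pos_left (hsign x ?_ hx.2.ne) (by linarith [hx.2])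
  exact abs_sub_lt_iff.2 ⟨by linarith [hx.1, hx.2], by linarith [hx.1, hx.2]⟩

theorem strictMonoOn_Icc_of_deriv_mul_sub_pos (hcont : ContinuousOn f (Icc (x₀ - δ) (x₀ + δ)))
    (hsign : ∀ x, |x - x₀| < δ → x ≠ x₀ → 0 < deriv f x * (x - x₀)) :
    StrictMonoOn f (Icc x₀ (x₀ + δ)) := by
  refine strictMonoOn_of_deriv_pos (convex_Icc _ _)
    (hcont.mono fun x hx => ⟨by linarith [hx.1, hx.2], hx.2⟩) fun x hx => ?_
  rw [interior_Icc] at hx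
  refine pos_of_mul_pos_left (hsign x ?_ hx.1.ne') (by linarith [hx.1])
  exact abs_sub_lt_iff.2 ⟨by linarith [hx.1, hx.2], by linarith [hx.1, hx.2]⟩

theorem le_of_deriv_mul_sub_pos (hcont : ContinuousOn f (Icc (x₀ - δ) (x₀ + δ)))
    (hsign : ∀ x, |x - x₀| < δ → x ≠ x₀ → 0 < deriv f x * (x - x₀))
    {x : ℝ} (hx : |x - x₀| < δ) : f x₀ ≤ f x := by
  obtain ⟨hx₁, hx₂⟩ := abs_sub_lt_iff.1 hx
  rcases le_total x x₀ with hle | hle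
  · exact (strictAntiOn_Icc_of_deriv_mul_sub_pos hcont hsign).antitoneOn
      ⟨by linarith, hle⟩ ⟨by linarith, le_rfl⟩ hle
  · exact (strictMonoOn_Icc_of_deriv_mul_sub_pos hcont hsign).monotoneOn
      ⟨le_rfl, by linarith⟩ ⟨hle, by linarith⟩ hle

theorem exists_two_preimages_of_deriv_mul_sub_pos (hδ : 0 < δ)
    (hcont : ContinuousOn f (Icc (x₀ - δ) (x₀ + δ)))
    (hsign : ∀ x, |x - x₀| < δ → x ≠ x₀ → 0 < deriv f x * (x - x₀)) :
    ∃ ε > f x₀, ∀ t ∈ Ioo (f x₀) ε, ∃ x₁ x₂, x₁ < x₀ ∧ x₀ < x₂ ∧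
      |x₁ - x₀| < δ ∧ |x₂ - x₀| < δ ∧ f x₁ = t ∧ f x₂ = t ∧
      ∀ x, |x - x₀| < δ → f x = t → x = x₁ ∨ x = x₂ := by
  have hanti := strictAntiOn_Icc_of_deriv_mul_sub_pos hcont hsign
  have hmono := strictMonoOn_Icc_of_deriv_mul_sub_pos hcont hsign
  refine ⟨min (f (x₀ - δ)) (f (x₀ + δ)),
    lt_min (hanti ⟨le_rfl, by linarith⟩ ⟨by linarith, le_rfl⟩ (by linarith))
      (hmono ⟨le_rfl, by linarith⟩ ⟨by linarith, le_rfl⟩ (by linarith)), fun t ht => ?_⟩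
  obtain ⟨x₁, hx₁, hx₁t⟩ := intermediate_value_Ioo' (by linarith)
    (hcont.mono (Icc_subset_Icc_right (by linarith)))
    ⟨ht.1, ht.2.trans_le (min_le_left _ _)⟩
  obtain ⟨x₂, hx₂, hx₂t⟩ := intermediate_value_Ioo (by linarith)
    (hcont.mono (Icc_subset_Icc_left (by linarith)))
    ⟨ht.1, ht.2.trans_le (min_le_right _ _)⟩
  refine ⟨x₁, x₂, hx₁.2, hx₂.1, abs_sub_lt_iff.2 ⟨by linarith [hx₁.2], by linarith [hx₁.1]⟩,
    abs_sub_lt_iff.2 ⟨by linarith [hx₂.2], by linarith [hx₂.1]⟩, hx₁t, hx₂t, fun x hx hxt => ?_⟩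
  obtain ⟨hxl, hxr⟩ := abs_sub_lt_iff.1 hx
  rcases le_total x x₀ with hle | hle
  · exact Or.inl (hanti.injOn ⟨by linarith, hle⟩ (Ioo_subset_Icc_self hx₁) (hxt.trans hx₁t.symm))
  · exact Or.inr (hmono.injOn ⟨hle, by linarith⟩ (Ioo_subset_Icc_self hx₂) (hxt.trans hx₂t.symm))

end Fold

theorem exists_fold_bifurcation {u : ℝ → ℝ} {x₀ δ c : ℝ} (hδ : 0 < δ) (hc : c ≠ 0)
    (hcont : ContinuousOn u (Icc (x₀ - δ) (x₀ + δ))) (hx₀ : u x₀ = 0)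
    (hsign : ∀ x, |x - x₀| < δ → x ≠ x₀ → 0 < c * deriv u x * (x - x₀)) :
    ∃ ε > 0, ∀ t, |t| < ε →
      (t / c < 0 → ∀ x, |x - x₀| < δ → u x ≠ t) ∧
      (t / c > 0 → ∃ x₁ x₂, x₁ ≠ x₂ ∧ |x₁ - x₀| < δ ∧ |x₂ - x₀| < δ ∧
        u x₁ = t ∧ deriv u x₁ < 0 ∧ u x₂ = t ∧ 0 < deriv u x₂ ∧
        ∀ x, |x - x₀| < δ → u x = t → x = x₁ ∨ x = x₂) := by
  have hcont' : ContinuousOn (fun x => c * u x) (Icc (x₀ - δ) (x₀ + δ)) :=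
    continuousOn_const.mul hcont
  have hsign' : ∀ x, |x - x₀| < δ → x ≠ x₀ → 0 < deriv (fun x => c * u x) x * (x - x₀) := by
    simpa only [deriv_const_mul_field'] using hsign
  obtain ⟨ε, hε, hfold⟩ := exists_two_preimages_of_deriv_mul_sub_pos hδ hcont' hsign'
  simp only [hx₀, mul_zero] at hε hfold
  refine ⟨ε / |c|, div_pos hε (abs_pos.2 hc), fun t ht => ⟨fun hneg x hx hxt => ?_, fun hpos => ?_⟩⟩
  · have := le_of_deriv_mul_sub_pos hcont' hsign' hx
    rw [hx₀, hxt] at this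
    linarith [mul_neg_iff.2 (div_neg_iff.1 hneg), mul_comm c t]
  have hct : c * t ∈ Ioo 0 ε := by
    refine ⟨by simpa [mul_comm] using mul_pos_iff.2 (div_pos_iff.1 hpos), ?_⟩
    calc c * t ≤ |c| * |t| := (le_abs_self _).trans (abs_mul _ _).le
      _ < |c| * (ε / |c|) := mul_lt_mul_of_pos_left ht (abs_pos.2 hc)
      _ = ε := mul_div_cancel₀ _ (abs_ne_zero.2 hc)
  obtain ⟨x₁, x₂, hx₁, hx₂, hδ₁, hδ₂, hx₁t, hx₂t, huniq⟩ := hfold _ hct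
  have hd₁ : c * deriv u x₁ < 0 :=
    neg_of_mul_pos_left (hsign x₁ hδ₁ hx₁.ne) (by linarith)
  have hd₂ : 0 < c * deriv u x₂ :=
    pos_of_mul_pos_left (hsign x₂ hδ₂ hx₂.ne') (by linarith)
  have huniq' : ∀ x, |x - x₀| < δ → u x = t → x = x₁ ∨ x = x₂ := fun x hx hxt =>
    huniq x hx (by rw [hxt])
  have hne : x₁ ≠ x₂ := (hx₁.trans hx₂).ne
  rcases hc.lt_or_gt with hc' | hc'
  · exact ⟨x₂, x₁, hne.symm, hδ₂, hδ₁, mul_left_cancel₀ hc hx₂t,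
      neg_of_mul_pos_right hd₂ hc'.le, mul_left_cancel₀ hc hx₁t,
      pos_of_mul_neg_right hd₁ hc'.le, fun x hx hxt => (huniq' x hx hxt).symm⟩
  · exact ⟨x₁, x₂, hne, hδ₁, hδ₂, mul_left_cancel₀ hc hx₁t, neg_of_mul_neg_right hd₁ hc'.le,
      mul_left_cancel₀ hc hx₂t, pos_of_mul_pos_right hd₂ hc'.le, huniq'⟩

noncomputable def effectivePotential (V : ℝ → ℝ) (ℓ r : ℝ) : ℝ := V r + ℓ / (2 * r ^ 2)

theorem analyticAt_effectivePotential {V : ℝ → ℝ} {r : ℝ} (hV : AnalyticAt ℝ V r) (hr : r ≠ 0)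
    (ℓ : ℝ) : AnalyticAt ℝ (effectivePotential V ℓ) r := by
  unfold effectivePotential
  fun_prop (disch := positivity)

theorem hasDerivAt_effectivePotential {V : ℝ → ℝ} {V' r : ℝ} (hV : HasDerivAt V V' r)
    (hr : r ≠ 0) (ℓ : ℝ) : HasDerivAt (effectivePotential V ℓ) (V' - ℓ / r ^ 3) r := by
  have hq := (hasDerivAt_const r ℓ).fun_div ((hasDerivAt_pow 2 r).const_mul 2) (by positivity)
  refine (hV.fun_add hq).congr_deriv ?_
  push_cast
  field_simp
  ring

theorem deriv_effectivePotential_eq_div {V : ℝ → ℝ} {r : ℝ} (hV : DifferentiableAt ℝ V r)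
    (hr : r ≠ 0) (ℓ ℓ₀ : ℝ) :
    deriv (effectivePotential V ℓ) r =
      (r ^ 3 * deriv (effectivePotential V ℓ₀) r - (ℓ - ℓ₀)) / r ^ 3 := by
  rw [(hasDerivAt_effectivePotential hV.hasDerivAt hr ℓ).deriv,
    (hasDerivAt_effectivePotential hV.hasDerivAt hr ℓ₀).deriv]
  field_simp
  ring

theorem deriv_effectivePotential_eq_zero_iff {V : ℝ → ℝ} {r : ℝ} (hV : DifferentiableAt ℝ V r)
    (hr : r ≠ 0) (ℓ ℓ₀ : ℝ) :
    deriv (effectivePotential V ℓ) r = 0 ↔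
      r ^ 3 * deriv (effectivePotential V ℓ₀) r = ℓ - ℓ₀ := by
  rw [deriv_effectivePotential_eq_div hV hr ℓ ℓ₀, div_eq_zero_iff,
    or_iff_left (pow_ne_zero 3 hr), sub_eq_zero]

theorem deriv_deriv_effectivePotential_of_deriv_eq_zero {V : ℝ → ℝ} {r ℓ : ℝ}
    (hV : AnalyticAt ℝ V r) (hr : r ≠ 0) (hcrit : deriv (effectivePotential V ℓ) r = 0)
    (ℓ₀ : ℝ) :
    deriv (deriv (effectivePotential V ℓ)) r =
      deriv (fun s => s ^ 3 * deriv (effectivePotential V ℓ₀) s) r / r ^ 3 := by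
  set u := fun s => s ^ 3 * deriv (effectivePotential V ℓ₀) s
  have heq : deriv (effectivePotential V ℓ) =ᶠ[𝓝 r] fun s => (u s - (ℓ - ℓ₀)) / s ^ 3 := by
    filter_upwards [hV.eventually_analyticAt, eventually_ne_nhds hr] with s hs hs0
    exact deriv_effectivePotential_eq_div hs.differentiableAt hs0 ℓ ℓ₀
  have hu : DifferentiableAt ℝ u r :=
    (differentiableAt_pow 3).mul (analyticAt_effectivePotential hV hr ℓ₀).deriv.differentiableAt
  have hzero : u r - (ℓ - ℓ₀) = 0 :=
    sub_eq_zero.2 ((deriv_effectivePotential_eq_zero_iff hV.differentiableAt hr ℓ ℓ₀).1 hcrit)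
  rw [heq.deriv_eq, ((hu.hasDerivAt.sub_const _).fun_div (hasDerivAt_pow 3 r)
    (pow_ne_zero 3 hr)).deriv, hzero]
  field_simp
  ring

theorem eventually_pos_mul_deriv_mul_deriv_mul_sub_of_even {F w : ℝ → ℝ} {x₀ : ℝ} {n : ℕ}
    (hF : AnalyticAt ℝ F x₀) (hw : AnalyticAt ℝ w x₀) (hw₀ : 0 < w x₀) (hn : Even n)
    (hn₀ : n ≠ 0) (hcrit : ∀ k, 1 ≤ k → k ≤ n → iteratedDeriv k F x₀ = 0)
    (ha : iteratedDeriv (n + 1) F x₀ ≠ 0) :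
    ∀ᶠ x in 𝓝[≠] x₀,
      0 < iteratedDeriv (n + 1) F x₀ * deriv (fun s => w s * deriv F s) x * (x - x₀) := by
  have hu_iter : ∀ k ≤ n,
      iteratedDeriv k (fun s => w s * deriv F s) x₀ = w x₀ * iteratedDeriv (k + 1) F x₀ := by
    intro k hk
    rw [iteratedDeriv_fun_mul_of_iteratedDeriv_eq_zero hw.contDiffAt hF.deriv.contDiffAt
      fun j hj => by rw [← iteratedDeriv_succ']; exact hcrit (j + 1) (by omega) (by omega),
      ← iteratedDeriv_succ']
  have hsign := eventually_pos_mul_mul_sub_of_odd (m := n - 1) (hw.fun_mul hF.deriv).deriv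
    (fun k hk => by
      rw [← iteratedDeriv_succ', hu_iter _ (by omega), hcrit _ (by omega) (by omega), mul_zero])
    (by rw [← iteratedDeriv_succ', Nat.sub_add_cancel (by omega), hu_iter n le_rfl]
        exact mul_ne_zero hw₀.ne' ha)
    (Nat.Even.sub_odd (by omega) hn odd_one)
  rw [← iteratedDeriv_succ', Nat.sub_add_cancel (by omega), hu_iter n le_rfl] at hsign
  filter_upwards [hsign] with x hx
  rw [mul_assoc, mul_assoc] at hx
  rw [mul_assoc]
  exact (mul_pos_iff_of_pos_left hw₀).1 hx

/-- Bifurcation at a degenerate inflection point of the effective potential: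
if the first nonvanishing derivative `∂_r^{n+1} V_eff(r̄,ℓ̄) = a ≠ 0` has `n`
even, then for `ℓ` near `ℓ̄` with `(ℓ-ℓ̄)/a < 0` there are no critical points
near `r̄`, while for `(ℓ-ℓ̄)/a > 0` there are exactly two: a nondegenerate
local maximum and a nondegenerate local minimum. -/
theorem critical_point_bifurcation_even
    (V : ℝ → ℝ) (hV : AnalyticOnNhd ℝ V (Ioi (0:ℝ)))
    (rb ℓb : ℝ) (hrb : 0 < rb) (n : ℕ) (hn : Even n) (hn2 : 2 ≤ n)
    (hcrit : ∀ k, 1 ≤ k → k ≤ n →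
      iteratedDeriv k (fun s => V s + ℓb / (2 * s ^ 2)) rb = 0)
    (ha : iteratedDeriv (n + 1) (fun s => V s + ℓb / (2 * s ^ 2)) rb ≠ 0) :
    ∃ ε > (0:ℝ), ∃ δ > (0:ℝ), ∀ ℓ : ℝ, |ℓ - ℓb| < ε →
      (((ℓ - ℓb) / iteratedDeriv (n + 1)
            (fun s => V s + ℓb / (2 * s ^ 2)) rb < 0) →
        ∀ r : ℝ, |r - rb| < δ →
          deriv (fun s => V s + ℓ / (2 * s ^ 2)) r ≠ 0) ∧
      (((ℓ - ℓb) / iteratedDeriv (n + 1)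
            (fun s => V s + ℓb / (2 * s ^ 2)) rb > 0) →
        ∃ rmax rmin : ℝ, rmax ≠ rmin ∧
          |rmax - rb| < δ ∧ |rmin - rb| < δ ∧
          deriv (fun s => V s + ℓ / (2 * s ^ 2)) rmax = 0 ∧
          deriv (deriv (fun s => V s + ℓ / (2 * s ^ 2))) rmax < 0 ∧
          deriv (fun s => V s + ℓ / (2 * s ^ 2)) rmin = 0 ∧
          deriv (deriv (fun s => V s + ℓ / (2 * s ^ 2))) rmin > 0 ∧
          ∀ r : ℝ, |r - rb| < δ →
            deriv (fun s => V s + ℓ / (2 * s ^ 2)) r = 0 →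
            r = rmax ∨ r = rmin) := by
  have hdef : ∀ ℓ, (fun s => V s + ℓ / (2 * s ^ 2)) = effectivePotential V ℓ := fun _ => rfl
  simp only [hdef] at hcrit ha ⊢
  set F := effectivePotential V ℓb
  set u : ℝ → ℝ := fun s => s ^ 3 * deriv F s
  have hF : ∀ r, 0 < r → AnalyticAt ℝ F r := fun r hr =>
    analyticAt_effectivePotential (hV r hr) hr.ne' ℓb
  obtain ⟨δ, hsign, hδ⟩ := ((eventually_nhdsGT_zero_forall_abs_sub_lt
    (eventually_pos_mul_deriv_mul_deriv_mul_sub_of_even (w := fun s => s ^ 3) (hF rb hrb)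
      (by fun_prop) (by positivity) hn (by omega) hcrit ha)).and (Ioo_mem_nhdsGT hrb)).exists
  have hpos : ∀ r, |r - rb| < δ → 0 < r := fun r hr => by
    linarith [(abs_sub_lt_iff.1 hr).2, hδ.2]
  have hcont : ContinuousOn u (Icc (rb - δ) (rb + δ)) := fun r hr =>
    ((analyticAt_id.pow 3).fun_mul (hF r (by linarith [hr.1, hδ.2])).deriv).continuousAt
      |>.continuousWithinAt
  obtain ⟨ε, hε, hfold⟩ := exists_fold_bifurcation hδ.1 ha hcont
    (by simp [u, ← iteratedDeriv_one, hcrit 1 le_rfl (by omega)]) hsign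
  have hcrit_iff : ∀ ℓ r, |r - rb| < δ →
      (deriv (effectivePotential V ℓ) r = 0 ↔ u r = ℓ - ℓb) := fun ℓ r hr =>
    deriv_effectivePotential_eq_zero_iff (hV r (hpos r hr)).differentiableAt
      (hpos r hr).ne' ℓ ℓb
  refine ⟨ε, hε, δ, hδ.1, fun ℓ hℓ => ⟨fun hneg r hr hr0 =>
    (hfold _ hℓ).1 hneg r hr ((hcrit_iff ℓ r hr).1 hr0), fun hpos_div => ?_⟩⟩
  obtain ⟨x₁, x₂, hne, h₁, h₂, hu₁, hd₁, hu₂, hd₂, huniq⟩ := (hfold _ hℓ).2 hpos_div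
  have hc₁ := (hcrit_iff ℓ x₁ h₁).2 hu₁
  have hc₂ := (hcrit_iff ℓ x₂ h₂).2 hu₂
  have hsecond : ∀ r, |r - rb| < δ → deriv (effectivePotential V ℓ) r = 0 →
      deriv (deriv (effectivePotential V ℓ)) r = deriv u r / r ^ 3 := fun r hr hr0 =>
    deriv_deriv_effectivePotential_of_deriv_eq_zero (hV r (hpos r hr)) (hpos r hr).ne' hr0 ℓb
  refine ⟨x₁, x₂, hne, h₁, h₂, hc₁, ?_, hc₂, ?_,
    fun r hr hr0 => huniq r hr ((hcrit_iff ℓ r hr).1 hr0)⟩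
  · rw [hsecond x₁ h₁ hc₁]
    exact div_neg_of_neg_of_pos hd₁ (pow_pos (hpos x₁ h₁) 3)
  · rw [hsecond x₂ h₂ hc₂]
    exact div_pos hd₂ (pow_pos (hpos x₂ h₂) 3)
end

section
/- Let h be C² on an open set in ℝ² with ω₂ = ∂h/∂I₂ ≠ 0, and set ν := ω₁/ω₂ where ωᵢ = ∂h/∂Iᵢ. Then the Arnold determinant D vanishes at a point if and only if ν satisfies the Burgers equation ∂ν/∂I₁ = ν · ∂ν/∂I₂ at that point. -/
/-!
By the quotient rule, `∂ᵥν = (ω₂ ∂ᵥω₁ - ω₁ ∂ᵥω₂) / ω₂²`, and `∂ᵥωᵢ` are entries of the Hessian of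
`h`, which is symmetric since `h` is `C²`. Substituting gives `ω₂³ (∂₁ν - ν ∂₂ν) = -D`, so for
`ω₂ ≠ 0` the Arnold determinant and the Burgers residual vanish together.
-/

section Calculus

variable {𝕜 E F : Type*} [NontriviallyNormedField 𝕜] [NormedAddCommGroup E] [NormedSpace 𝕜 E]
  [NormedAddCommGroup F] [NormedSpace 𝕜 F]

theorem fderiv_div_apply {c d : E → 𝕜} {x : E} (hc : DifferentiableAt 𝕜 c x)
    (hd : DifferentiableAt 𝕜 d x) (hx : d x ≠ 0) (w : E) :
    fderiv 𝕜 (fun y => c y / d y) x w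
      = (d x * fderiv 𝕜 c x w - c x * fderiv 𝕜 d x w) / d x ^ 2 := by
  have hd' : DifferentiableAt 𝕜 (fun y => (d y)⁻¹) x := hd.inv hx
  simp only [div_eq_mul_inv]
  rw [fderiv_fun_mul hc hd', fderiv_fun_comp x (differentiableAt_inv hx) hd, fderiv_inv]
  simp only [add_apply, smul_apply, ContinuousLinearMap.comp_apply,
    ContinuousLinearMap.toSpanSingleton_apply, smul_eq_mul, mul_neg]
  field_simp
  ring

theorem fderiv_fderiv_apply {f : E → F} {x : E} (hf : DifferentiableAt 𝕜 (fderiv 𝕜 f) x)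
    (v w : E) : fderiv 𝕜 (fun y => fderiv 𝕜 f y v) x w = fderiv 𝕜 (fderiv 𝕜 f) x w v := by
  rw [fderiv_clm_apply hf (differentiableAt_const v)]
  simp

theorem ContDiffAt.fderiv_fderiv_apply_comm {f : E → F} {x : E} {n : WithTop ℕ∞}
    (hf : ContDiffAt 𝕜 n f x) (hn : minSmoothness 𝕜 2 ≤ n) (v w : E) :
    fderiv 𝕜 (fun y => fderiv 𝕜 f y v) x w = fderiv 𝕜 (fun y => fderiv 𝕜 f y w) x v := by
  have h2 : 2 ≤ n := le_trans le_minSmoothness hn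
  have hdf : DifferentiableAt 𝕜 (fderiv 𝕜 f) x :=
    (hf.fderiv_right (m := 1) h2).differentiableAt one_ne_zero
  rw [fderiv_fderiv_apply hdf, fderiv_fderiv_apply hdf]
  exact hf.isSymmSndFDerivAt hn w v
end Calculus

theorem arnold_det_eq_zero_iff {𝕜 : Type*} [Field 𝕜] {a b p q r : 𝕜} (hb : b ≠ 0) :
    -p * b ^ 2 + 2 * q * a * b - r * a ^ 2 = 0 ↔
      (b * p - a * q) / b ^ 2 = a / b * ((b * q - a * r) / b ^ 2) := by
  have hresidual : (b * p - a * q) / b ^ 2 - a / b * ((b * q - a * r) / b ^ 2)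
      = -(-p * b ^ 2 + 2 * q * a * b - r * a ^ 2) / b ^ 3 := by
    field_simp
    ring
  rw [← sub_eq_zero (a := (b * p - a * q) / b ^ 2), hresidual, div_eq_zero_iff, neg_eq_zero,
    or_iff_left (pow_ne_zero 3 hb)]

/-- When `ω₂ ≠ 0`, the vanishing of the Arnold determinant at a point is
equivalent to the Burgers equation `∂ν/∂I₁ = ν ∂ν/∂I₂` for `ν = ω₁/ω₂`. -/
theorem arnold_det_zero_iff_burgers
    (A : Set (ℝ × ℝ)) (hA : IsOpen A)
    (h : ℝ × ℝ → ℝ) (hh : ContDiffOn ℝ 2 h A)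
    (ω₁ ω₂ : ℝ × ℝ → ℝ)
    (hω₁ : ∀ x, ω₁ x = fderiv ℝ h x (1, 0))
    (hω₂ : ∀ x, ω₂ x = fderiv ℝ h x (0, 1))
    (hω₂ne : ∀ x ∈ A, ω₂ x ≠ 0)
    (ν : ℝ × ℝ → ℝ) (hν : ∀ x, ν x = ω₁ x / ω₂ x)
    (I : ℝ × ℝ) (hI : I ∈ A)
    (H : ℝ × ℝ → ℝ × ℝ → ℝ)
    (hH : ∀ v w, H v w = fderiv ℝ (fun x => fderiv ℝ h x v) I w) :
    (-(H (1, 0) (1, 0)) * (ω₂ I) ^ 2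
        + 2 * H (1, 0) (0, 1) * ω₁ I * ω₂ I
        - H (0, 1) (0, 1) * (ω₁ I) ^ 2 = 0) ↔
      fderiv ℝ ν I (1, 0) = ν I * fderiv ℝ ν I (0, 1) := by
  have hc : ContDiffAt ℝ 2 h I := hh.contDiffAt (hA.mem_nhds hI)
  have hdiff : ∀ v, DifferentiableAt ℝ (fun x => fderiv ℝ h x v) I := fun v =>
    (hc.fderiv_right (m := 1) le_rfl).differentiableAt one_ne_zero |>.clm_apply
      (differentiableAt_const v)
  obtain rfl : ω₁ = _ := funext hω₁
  obtain rfl : ω₂ = _ := funext hω₂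
  obtain rfl : ν = _ := funext hν
  have hsymm : H (0, 1) (1, 0) = H (1, 0) (0, 1) := by
    rw [hH, hH]
    exact hc.fderiv_fderiv_apply_comm (by simp) _ _
  have hquot := fderiv_div_apply (hdiff (1, 0)) (hdiff (0, 1)) (hω₂ne I hI)
  rw [hquot, hquot, ← hH, ← hH, ← hH, ← hH, hsymm]
  exact arnold_det_eq_zero_iff (hω₂ne I hI)
end
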